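/- arXiv:2303.15010 — 2 statements merged into one kernel-verified Lean document; each statement's English description precedes it below -/
import Mathlib

section
/- There is no positive integer n such that 2 divides the numerator of the harmonic number H(n); equivalently, ν_2(H(n)) ≤ 0 for all n ≥ 1 (and in fact ν_2(H(n)) < 0 for n ≥ 2). -/
def H (n : ℕ) : ℚ := ∑ i ∈ Finset.range n, (1 : ℚ) / (i + 1)

lemma H_eq_harmonic (n : ℕ) : H n = harmonic n := by
  simp only [H, harmonic, one_div, Nat.cast_succ]

lemma padicValRat_two_H (n : ℕ) : padicValRat 2 (H n) = -Nat.log 2 n := by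
  rw [H_eq_harmonic, padicValRat_two_harmonic]

theorem stmt_13 :
    (∀ n : ℕ, 1 ≤ n → padicValRat 2 (H n) ≤ 0) ∧
      (∀ n : ℕ, 2 ≤ n → padicValRat 2 (H n) < 0) := by
  refine ⟨fun n _ => ?_, fun n hn => ?_⟩
  · rw [padicValRat_two_H]
    omega
  · have hlog : 1 ≤ Nat.log 2 n := Nat.le_log_of_pow_le (by norm_num) (by omega)
    rw [padicValRat_two_H]
    omega
end

section
/- For every prime p ≥ 5, the three integers p−1, p(p−1), and p²−1 all belong to J_p, i.e., ν_p(H(p−1)) ≥ 1, ν_p(H(p(p−1))) ≥ 1, and ν_p(H(p²−1)) ≥ 1. -/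
open Finset

theorem ZMod.sum_range_natCast {M : Type*} [AddCommMonoid M] (n : ℕ) [NeZero n]
    (f : ZMod n → M) : ∑ i ∈ range n, f i = ∑ x, f x :=
  sum_nbij' (fun i => (i : ZMod n)) ZMod.val (fun _ _ => mem_univ _)
    (fun x _ => mem_range.2 x.val_lt) (fun _ hi => ZMod.val_cast_of_lt (mem_range.1 hi))
    (fun x _ => ZMod.natCast_zmod_val x) (fun _ _ => rfl)

theorem ZMod.sum_range_inv_pow_succ (p : ℕ) [Fact p.Prime] {k : ℕ} (hk0 : 0 < k)
    (hk : k < p - 1) : ∑ i ∈ range (p - 1), (((i + 1 : ℕ) : ZMod p) ^ k)⁻¹ = 0 := by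
  have hshift := sum_range_succ' (fun i : ℕ => ((i : ZMod p) ^ k)⁻¹) (p - 1)
  rw [Nat.sub_add_cancel (Fact.out : p.Prime).one_le] at hshift
  calc ∑ i ∈ range (p - 1), (((i + 1 : ℕ) : ZMod p) ^ k)⁻¹
      = ∑ i ∈ range p, ((i : ZMod p) ^ k)⁻¹ := by simp [hshift, hk0.ne']
    _ = ∑ x : ZMod p, (x ^ k)⁻¹ := ZMod.sum_range_natCast p fun x => (x ^ k)⁻¹
    _ = ∑ x : ZMod p, x ^ k := by
        simp_rw [← inv_pow]; exact Fintype.sum_equiv (Equiv.inv _) _ _ fun _ => rfl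
    _ = 0 := FiniteField.sum_pow_lt_card_sub_one (K := ZMod p) k (by rwa [ZMod.card])

theorem one_le_padicValRat_natCast_div {p N D : ℕ} [Fact p.Prime] (hN : N ≠ 0) (hpN : p ∣ N)
    (hpD : ¬ p ∣ D) : 1 ≤ padicValRat p (N / D) := by
  have hD : D ≠ 0 := fun h => hpD (h ▸ dvd_zero p)
  rw [padicValRat.div (by exact_mod_cast hN) (by exact_mod_cast hD), padicValRat.of_nat,
    padicValRat.of_nat, padicValNat.eq_zero_of_not_dvd hpD]
  have := one_le_padicValNat_of_dvd hN hpN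
  omega

theorem one_le_padicValRat_sum_one_div {ι : Type*} {p : ℕ} [Fact p.Prime] {s : Finset ι}
    (hs : s.Nonempty) {a : ι → ℕ} (ha : ∀ i ∈ s, ¬ p ∣ a i)
    (hsum : ∑ i ∈ s, ((a i : ZMod p))⁻¹ = 0) :
    1 ≤ padicValRat p (∑ i ∈ s, 1 / (a i : ℚ)) := by
  classical
  have hp : p.Prime := Fact.out
  have ha0 : ∀ i ∈ s, a i ≠ 0 := fun i hi h => ha i hi (h ▸ dvd_zero p)
  let D := ∏ i ∈ s, a i
  let N := ∑ i ∈ s, ∏ j ∈ s.erase i, a j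
  have hDi : ∀ i ∈ s, D = a i * ∏ j ∈ s.erase i, a j := fun i hi => (mul_prod_erase s a hi).symm
  have hD : ¬ p ∣ D := by
    rw [Prime.dvd_finsetProd_iff hp.prime]; exact fun ⟨i, hi, h⟩ => ha i hi h
  have hN0 : N ≠ 0 :=
    (sum_pos (fun _ _ => prod_pos fun j hj => Nat.pos_of_ne_zero (ha0 j (mem_of_mem_erase hj)))
      hs).ne'
  -- modulo `p`, `N = D * ∑ (a i)⁻¹`
  have hpN : p ∣ N := by
    rw [← ZMod.natCast_eq_zero_iff, Nat.cast_sum]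
    calc ∑ i ∈ s, ((∏ j ∈ s.erase i, a j : ℕ) : ZMod p)
        = ∑ i ∈ s, (D : ZMod p) * (a i : ZMod p)⁻¹ := by
          refine sum_congr rfl fun i hi => ?_
          have : (a i : ZMod p) ≠ 0 := by rw [Ne, ZMod.natCast_eq_zero_iff]; exact ha i hi
          rw [hDi i hi, Nat.cast_mul, mul_comm, inv_mul_cancel_left₀ this]
      _ = 0 := by rw [← mul_sum, hsum, mul_zero]
  have hsumQ : ∑ i ∈ s, 1 / (a i : ℚ) = N / D := by
    rw [Nat.cast_sum, sum_div]
    refine sum_congr rfl fun i hi => ?_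
    have : (a i : ℚ) ≠ 0 := Nat.cast_ne_zero.2 (ha0 i hi)
    have : ((∏ j ∈ s.erase i, a j : ℕ) : ℚ) ≠ 0 := by
      rw [Nat.cast_ne_zero]; exact prod_ne_zero_iff.2 fun j hj => ha0 j (mem_of_mem_erase hj)
    rw [hDi i hi, Nat.cast_mul]
    field_simp
  rw [hsumQ]
  exact one_le_padicValRat_natCast_div hN0 hpN hD

theorem le_padicValRat_add_of_le_of_le {p : ℕ} [Fact p.Prime] {q r : ℚ} {k : ℤ} (hqr : q + r ≠ 0)
    (hq : k ≤ padicValRat p q) (hr : k ≤ padicValRat p r) : k ≤ padicValRat p (q + r) :=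
  (le_min hq hr).trans (padicValRat.min_le_padicValRat_add hqr)

theorem H_succ (n : ℕ) : H (n + 1) = H n + 1 / (n + 1) :=
  sum_range_succ _ n

theorem H_add (m r : ℕ) : H (m + r) = H m + ∑ j ∈ range r, 1 / ((m + j + 1 : ℕ) : ℚ) := by
  simp only [H, sum_range_add, Nat.cast_add, Nat.cast_one, add_assoc]

theorem H_pos {n : ℕ} (hn : 0 < n) : 0 < H n :=
  sum_pos (fun _ _ => by positivity) (nonempty_range_iff.2 hn.ne')

theorem two_mul_H_pred (p : ℕ) :
    2 * H (p - 1) = p * ∑ i ∈ range (p - 1), 1 / (((i + 1) * (p - 1 - i) : ℕ) : ℚ) := by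
  have hreflect : ∑ i ∈ range (p - 1), 1 / ((p - 1 - i : ℕ) : ℚ) = H (p - 1) := by
    rw [H, ← sum_range_reflect]
    refine sum_congr rfl fun i hi => ?_
    rw [mem_range] at hi
    rw [show p - 1 - (p - 1 - 1 - i) = i + 1 by omega]
    push_cast; ring
  calc 2 * H (p - 1)
      = ∑ i ∈ range (p - 1), (1 / ((i + 1 : ℕ) : ℚ) + 1 / ((p - 1 - i : ℕ) : ℚ)) := by
        rw [sum_add_distrib, hreflect, H]; push_cast; ring
    _ = ∑ i ∈ range (p - 1), p * (1 / (((i + 1) * (p - 1 - i) : ℕ) : ℚ)) := by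
        refine sum_congr rfl fun i hi => ?_
        rw [mem_range] at hi
        have hsub : ((p - 1 - i : ℕ) : ℚ) = p - (i + 1) := by
          rw [Nat.sub_sub, Nat.cast_sub (by omega)]; push_cast; ring
        have : (p : ℚ) - (i + 1) ≠ 0 := by rw [← hsub]; norm_cast; omega
        rw [Nat.cast_mul, hsub]
        push_cast
        field_simp
        ring
    _ = _ := (mul_sum _ _ _).symm

theorem one_le_padicValRat_sum_one_div_mul_reflect {p : ℕ} [Fact p.Prime] (hp : 3 < p) :
    1 ≤ padicValRat p (∑ i ∈ range (p - 1), 1 / (((i + 1) * (p - 1 - i) : ℕ) : ℚ)) := by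
  have hp' : p.Prime := Fact.out
  refine one_le_padicValRat_sum_one_div (nonempty_range_iff.2 (by omega)) (fun i hi h => ?_) ?_
  · rw [mem_range] at hi
    rcases (Nat.Prime.dvd_mul hp').1 h with h | h <;> have := Nat.le_of_dvd (by omega) h <;> omega
  · have hneg : ∀ i ∈ range (p - 1), ((p - 1 - i : ℕ) : ZMod p) = -((i + 1 : ℕ) : ZMod p) := by
      intro i hi
      rw [mem_range] at hi
      rw [show p - 1 - i = p - (i + 1) by omega, Nat.cast_sub (by omega), ZMod.natCast_self,
        zero_sub]
    calc ∑ i ∈ range (p - 1), (((i + 1) * (p - 1 - i) : ℕ) : ZMod p)⁻¹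
        = -∑ i ∈ range (p - 1), (((i + 1 : ℕ) : ZMod p) ^ 2)⁻¹ := by
          rw [← sum_neg_distrib]
          refine sum_congr rfl fun i hi => ?_
          rw [Nat.cast_mul, hneg i hi, mul_neg, inv_neg, sq]
      _ = 0 := by rw [ZMod.sum_range_inv_pow_succ p two_pos (by omega), neg_zero]

theorem two_le_padicValRat_H_pred {p : ℕ} [Fact p.Prime] (hp : 5 ≤ p) :
    2 ≤ padicValRat p (H (p - 1)) := by
  have hp' : p.Prime := Fact.out
  have hT := one_le_padicValRat_sum_one_div_mul_reflect (p := p) (by omega)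
  have h2 : padicValRat p 2 = 0 := by
    rw [← Nat.cast_ofNat, padicValRat.of_nat,
      padicValNat.eq_zero_of_not_dvd fun h => by have := Nat.le_of_dvd two_pos h; omega]
    rfl
  have hH := H_pos (show 0 < p - 1 by omega)
  have hTpos : 0 < ∑ i ∈ range (p - 1), 1 / (((i + 1) * (p - 1 - i) : ℕ) : ℚ) := by
    have := mul_pos two_pos hH; rw [two_mul_H_pred] at this
    exact pos_of_mul_pos_right this (Nat.cast_nonneg p)
  have := congrArg (padicValRat p) (two_mul_H_pred p)
  rw [padicValRat.mul two_ne_zero hH.ne', padicValRat.mul (by exact_mod_cast hp'.ne_zero) hTpos.ne',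
    h2, padicValRat.self hp'.one_lt] at this
  omega

def harmonicBlock (p k : ℕ) : ℚ := ∑ j ∈ range (p - 1), 1 / ((p * k + j + 1 : ℕ) : ℚ)

theorem harmonicBlock_pos {p : ℕ} (hp : 1 < p) (k : ℕ) : 0 < harmonicBlock p k :=
  sum_pos (fun _ _ => by positivity) (nonempty_range_iff.2 (by omega))

theorem H_mul_add_pred (p n : ℕ) : H (p * n + (p - 1)) = H (p * n) + harmonicBlock p n :=
  H_add _ _

theorem H_mul (p n : ℕ) (hp : 0 < p) : H (p * n) = ∑ k ∈ range n, harmonicBlock p k + H n / p := by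
  induction n with
  | zero => simp [H]
  | succ n ih =>
    have hidx : p * n + (p - 1) + 1 = p * (n + 1) := by rw [mul_add_one]; omega
    have hcast : ((p * n + (p - 1) : ℕ) : ℚ) + 1 = p * (n + 1) := by exact_mod_cast hidx
    have : (p : ℚ) ≠ 0 := by exact_mod_cast hp.ne'
    rw [← hidx, H_succ, H_mul_add_pred, ih, sum_range_succ, H_succ, hcast]
    field_simp
    ring

theorem one_le_padicValRat_harmonicBlock {p : ℕ} [Fact p.Prime] (hp : 2 < p) (k : ℕ) :
    1 ≤ padicValRat p (harmonicBlock p k) := by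
  refine one_le_padicValRat_sum_one_div (nonempty_range_iff.2 (by omega)) (fun j hj h => ?_) ?_
  · rw [mem_range] at hj
    rw [add_assoc, Nat.dvd_add_right (dvd_mul_right p k)] at h
    have := Nat.le_of_dvd (by omega) h
    omega
  · simpa [add_assoc] using ZMod.sum_range_inv_pow_succ p one_pos (by omega)

theorem one_le_padicValRat_H_mul {p n : ℕ} [Fact p.Prime] (hp : 2 < p)
    (hH : 2 ≤ padicValRat p (H n)) : 1 ≤ padicValRat p (H (p * n)) := by
  have hp' : p.Prime := Fact.out
  have hn : 0 < n := Nat.pos_of_ne_zero fun h => by simp [h, H] at hH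
  have hblocks : 0 < ∑ k ∈ range n, harmonicBlock p k :=
    sum_pos (fun k _ => harmonicBlock_pos (by omega) k) (nonempty_range_iff.2 hn.ne')
  have hquot : 0 < H n / p := div_pos (H_pos hn) (by exact_mod_cast hp'.pos)
  rw [H_mul p n hp'.pos]
  refine le_padicValRat_add_of_le_of_le (add_pos hblocks hquot).ne' ?_ ?_
  · exact padicValRat.sum_pos_of_pos (fun k _ => one_le_padicValRat_harmonicBlock hp k)
      hblocks.ne'
  · rw [padicValRat.div (H_pos hn).ne' (by exact_mod_cast hp'.ne_zero), padicValRat.self hp'.one_lt]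
    omega

theorem stmt_14 (p : ℕ) (hp : p.Prime) (hp5 : 5 ≤ p) :
    1 ≤ padicValRat p (H (p - 1)) ∧
      1 ≤ padicValRat p (H (p * (p - 1))) ∧
        1 ≤ padicValRat p (H (p ^ 2 - 1)) := by
  have := Fact.mk hp
  have hwolstenholme := two_le_padicValRat_H_pred hp5
  have hmul := one_le_padicValRat_H_mul (by omega) hwolstenholme
  refine ⟨by omega, hmul, ?_⟩
  rw [show p ^ 2 - 1 = p * (p - 1) + (p - 1) by rw [← add_one_mul, ← Nat.sq_sub_sq, one_pow],
    H_mul_add_pred]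
  have hpos := add_pos (H_pos (Nat.mul_pos hp.pos (by omega : 0 < p - 1)))
    (harmonicBlock_pos hp.one_lt (p - 1))
  exact le_padicValRat_add_of_le_of_le hpos.ne' hmul (one_le_padicValRat_harmonicBlock (by omega) _)
end
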